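/- For every complex number q with |q| < 1, ∑_{n≥1} q^n / [ (q^{n+1}; q)_∞ (−q^n; q)_∞^2 (q^3; q^3)_n ] = 1/(q^3; q^3)_∞ − (q; q^2)_∞ / (q^2; q^2)_∞. -/

import Mathlib

/-- Finite q-Pochhammer symbol `(a; q)_n = ∏_{j=0}^{n-1} (1 - a q^j)`. -/
noncomputable def qPoch (q a : ℂ) (n : ℕ) : ℂ := ∏ j ∈ Finset.range n, (1 - a * q ^ j)

/-- Infinite q-Pochhammer symbol `(a; q)_∞ = ∏_{j=0}^{∞} (1 - a q^j)`. -/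
noncomputable def qPochInf (q a : ℂ) : ℂ := ∏' j : ℕ, (1 - a * q ^ j)

/-!
Write `(a)_∞ = (a; q)_∞` and `F n = (q;q)_n (-q;q)_n^2 / (q^3;q^3)_n`. Since
`(q^(n+2))_∞ = (q)_∞ / (q)_(n+1)` and `(-q^(n+1))_∞ = (-q)_∞ / (-q)_n`, the `n`-th summand is
`(F (n+1) - F n) / ((q)_∞ (-q)_∞^2)`, so the series telescopes to
`1 / (q^3;q^3)_∞ - 1 / ((q)_∞ (-q)_∞^2)`. Euler's identity `(q;q^2)_∞ (-q;q)_∞ = 1`, together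
with `(q)_∞ (-q)_∞ = (q^2;q^2)_∞`, identifies the last term with `(q;q^2)_∞ / (q^2;q^2)_∞`.
-/

open Filter Topology Asymptotics

theorem hasSum_succ_sub_of_tendsto {G : Type*} [AddCommGroup G] [TopologicalSpace G]
    [IsTopologicalAddGroup G] [T2Space G] {F : ℕ → G} {L : G}
    (hs : Summable fun n => F (n + 1) - F n) (hF : Tendsto F atTop (𝓝 L)) :
    HasSum (fun n => F (n + 1) - F n) (L - F 0) := by
  rw [hs.hasSum_iff_tendsto_nat]
  simpa only [Finset.sum_range_sub] using hF.sub_const (F 0)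

theorem summable_pow_mul_of_tendsto {R : Type*} [NormedRing R] [NormOneClass R] [CompleteSpace R]
    {q c : R} {u : ℕ → R} (hq : ‖q‖ < 1) (hu : Tendsto u atTop (𝓝 c)) :
    Summable fun n => q ^ n * u n := by
  refine summable_of_isBigO_nat (summable_geometric_of_lt_one (norm_nonneg q) hq) ?_
  have hpow : (fun n => q ^ n) =O[atTop] fun n => ‖q‖ ^ n :=
    isBigO_of_le _ fun n => by simpa using norm_pow_le q n
  simpa using hpow.mul (hu.isBigO_one ℝ)

section QPochhammer

variable {q : ℂ}

theorem norm_pow_lt_one (hq : ‖q‖ < 1) {k : ℕ} (hk : k ≠ 0) : ‖q ^ k‖ < 1 := by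
  rw [norm_pow]
  exact pow_lt_one₀ (norm_nonneg q) hq hk

theorem qPoch_succ (a : ℂ) (n : ℕ) : qPoch q a (n + 1) = qPoch q a n * (1 - a * q ^ n) :=
  Finset.prod_range_succ _ n

theorem one_sub_mul_pow_ne_zero {a : ℂ} (hq : ‖q‖ ≤ 1) (ha : ‖a‖ < 1) (j : ℕ) :
    1 - a * q ^ j ≠ 0 := by
  refine sub_ne_zero.2 (ne_of_apply_ne norm (ne_of_gt ?_))
  calc ‖a * q ^ j‖ = ‖a‖ * ‖q‖ ^ j := by rw [norm_mul, norm_pow]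
    _ ≤ ‖a‖ := mul_le_of_le_one_right (norm_nonneg a) (pow_le_one₀ (norm_nonneg q) hq)
    _ < ‖(1 : ℂ)‖ := by rwa [norm_one]

theorem qPoch_ne_zero {a : ℂ} (hq : ‖q‖ ≤ 1) (ha : ‖a‖ < 1) (n : ℕ) : qPoch q a n ≠ 0 :=
  Finset.prod_ne_zero_iff.2 fun j _ => one_sub_mul_pow_ne_zero hq ha j

theorem summable_norm_mul_pow (hq : ‖q‖ < 1) (a : ℂ) : Summable fun j : ℕ => ‖a * q ^ j‖ := by
  simpa only [norm_mul, norm_pow] using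
    (summable_geometric_of_lt_one (norm_nonneg q) hq).mul_left ‖a‖

theorem multipliable_one_sub_mul_pow (hq : ‖q‖ < 1) (a : ℂ) :
    Multipliable fun j : ℕ => 1 - a * q ^ j := by
  simpa only [sub_eq_add_neg] using
    multipliable_one_add_of_summable (f := fun j => -(a * q ^ j)) (by
      simpa only [norm_neg] using summable_norm_mul_pow hq a)

theorem qPochInf_ne_zero {a : ℂ} (hq : ‖q‖ < 1) (ha : ‖a‖ < 1) : qPochInf q a ≠ 0 := by
  simpa only [qPochInf, sub_eq_add_neg] using
    tprod_one_add_ne_zero_of_summable (f := fun j => -(a * q ^ j))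
      (by simpa only [← sub_eq_add_neg] using one_sub_mul_pow_ne_zero hq.le ha)
      (by simpa only [norm_neg] using summable_norm_mul_pow hq a)

theorem tendsto_qPoch (hq : ‖q‖ < 1) (a : ℂ) :
    Tendsto (qPoch q a) atTop (𝓝 (qPochInf q a)) :=
  (multipliable_one_sub_mul_pow hq a).hasProd.tendsto_prod_nat

theorem qPoch_mul_qPochInf (hq : ‖q‖ < 1) (a : ℂ) (n : ℕ) :
    qPoch q a n * qPochInf q (a * q ^ n) = qPochInf q a := by
  have htail : (fun i => 1 - a * q ^ (i + n)) = fun i => 1 - a * q ^ n * q ^ i := by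
    ext i; ring
  have hm : Multipliable fun i => 1 - a * q ^ (i + n) := by
    rw [htail]; exact multipliable_one_sub_mul_pow hq (a * q ^ n)
  have := Multipliable.prod_mul_tprod_nat_mul' (f := fun j => 1 - a * q ^ j) (k := n) hm
  rwa [htail] at this

theorem qPochInf_mul_qPochInf_neg (hq : ‖q‖ < 1) (a : ℂ) :
    qPochInf q a * qPochInf q (-a) = qPochInf (q ^ 2) (a ^ 2) := by
  rw [qPochInf, qPochInf, qPochInf, ← (multipliable_one_sub_mul_pow hq a).tprod_mul
    (multipliable_one_sub_mul_pow hq (-a))]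
  exact tprod_congr fun j => by ring

theorem qPochInf_eq_mul_qPochInf_sq (hq : ‖q‖ < 1) (a : ℂ) :
    qPochInf q a = qPochInf (q ^ 2) a * qPochInf (q ^ 2) (a * q) := by
  have hq2 := norm_pow_lt_one hq two_ne_zero
  have he : (fun k => 1 - a * q ^ (2 * k)) = fun k => 1 - a * (q ^ 2) ^ k := by ext k; ring
  have ho : (fun k => 1 - a * q ^ (2 * k + 1)) = fun k => 1 - a * q * (q ^ 2) ^ k := by
    ext k; ring
  have := tprod_even_mul_odd (f := fun j => 1 - a * q ^ j)
    (by simpa only [he] using multipliable_one_sub_mul_pow hq2 a)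
    (by simpa only [ho] using multipliable_one_sub_mul_pow hq2 (a * q))
  simp only [he, ho] at this
  rw [qPochInf, qPochInf, qPochInf, this]

theorem qPochInf_sq_mul_qPochInf_neg (hq : ‖q‖ < 1) :
    qPochInf (q ^ 2) q * qPochInf q (-q) = 1 := by
  have hodd := qPochInf_eq_mul_qPochInf_sq hq q
  rw [← sq] at hodd
  refine mul_left_cancel₀ (qPochInf_ne_zero hq hq) ?_
  calc qPochInf q q * (qPochInf (q ^ 2) q * qPochInf q (-q))
      = qPochInf (q ^ 2) q * (qPochInf q q * qPochInf q (-q)) := by ring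
    _ = qPochInf q q * 1 := by rw [qPochInf_mul_qPochInf_neg hq q, ← hodd, mul_one]

noncomputable def qTelescope (q : ℂ) (n : ℕ) : ℂ :=
  qPoch q q n * qPoch q (-q) n ^ 2 / qPoch (q ^ 3) (q ^ 3) n

theorem qTelescope_zero : qTelescope q 0 = 1 := by
  simp [qTelescope, qPoch]

theorem qTelescope_succ_sub {n : ℕ} (hn : qPoch (q ^ 3) (q ^ 3) (n + 1) ≠ 0) :
    qTelescope q (n + 1) - qTelescope q n =
      q ^ (n + 1) * (qPoch q q (n + 1) * qPoch q (-q) n ^ 2 / qPoch (q ^ 3) (q ^ 3) (n + 1)) := by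
  rw [qPoch_succ] at hn ⊢
  obtain ⟨hh, hx⟩ := mul_ne_zero_iff.1 hn
  simp only [qTelescope, qPoch_succ]
  field_simp
  -- with `x = q^(n+1)`: `(1 - x) (1 + x)^2 - (1 - x^3) = x (1 - x)`
  ring

theorem tendsto_qTelescope (hq : ‖q‖ < 1) :
    Tendsto (qTelescope q) atTop
      (𝓝 (qPochInf q q * qPochInf q (-q) ^ 2 / qPochInf (q ^ 3) (q ^ 3))) :=
  have hq3 := norm_pow_lt_one hq three_ne_zero
  ((tendsto_qPoch hq q).mul ((tendsto_qPoch hq (-q)).pow 2)).div (tendsto_qPoch hq3 _)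
    (qPochInf_ne_zero hq3 hq3)

theorem summable_qTelescope_succ_sub (hq : ‖q‖ < 1) :
    Summable fun n => qTelescope q (n + 1) - qTelescope q n := by
  have hq3 := norm_pow_lt_one hq three_ne_zero
  have hu : Tendsto
      (fun n => q * (qPoch q q (n + 1) * qPoch q (-q) n ^ 2 / qPoch (q ^ 3) (q ^ 3) (n + 1)))
      atTop (𝓝 (q * (qPochInf q q * qPochInf q (-q) ^ 2 / qPochInf (q ^ 3) (q ^ 3)))) := by
    have hshift := tendsto_add_atTop_nat 1
    exact (((tendsto_qPoch hq q).comp hshift).mul ((tendsto_qPoch hq (-q)).pow 2)).div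
      ((tendsto_qPoch hq3 _).comp hshift) (qPochInf_ne_zero hq3 hq3) |>.const_mul q
  refine (summable_pow_mul_of_tendsto hq hu).congr fun n => ?_
  rw [qTelescope_succ_sub (qPoch_ne_zero hq3.le hq3 _)]
  ring

theorem summand_eq_qTelescope_succ_sub_div (hq : ‖q‖ < 1) (n : ℕ) :
    q ^ (n + 1) / (qPochInf q (q ^ (n + 2)) * (qPochInf q (-q ^ (n + 1))) ^ 2 *
        qPoch (q ^ 3) (q ^ 3) (n + 1)) =
      (qTelescope q (n + 1) - qTelescope q n) / (qPochInf q q * qPochInf q (-q) ^ 2) := by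
  have hq3 := norm_pow_lt_one hq three_ne_zero
  have hf := qPoch_mul_qPochInf hq q (n + 1)
  have hg := qPoch_mul_qPochInf hq (-q) n
  rw [← pow_succ'] at hf
  rw [neg_mul, ← pow_succ'] at hg
  rw [qTelescope_succ_sub (qPoch_ne_zero hq3.le hq3 _), ← hf, ← hg]
  have := qPoch_ne_zero hq.le hq (n + 1)
  have := qPoch_ne_zero hq.le (a := -q) (by rwa [norm_neg]) n
  field_simp

end QPochhammer

theorem thmA2_a (q : ℂ) (hq : ‖q‖ < 1) :
    ∑' n : ℕ, q ^ (n + 1) /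
        (qPochInf q (q ^ (n + 2)) * (qPochInf q (-q ^ (n + 1))) ^ 2 *
          qPoch (q ^ 3) (q ^ 3) (n + 1))
      = 1 / qPochInf (q ^ 3) (q ^ 3) - qPochInf (q ^ 2) q / qPochInf (q ^ 2) (q ^ 2) := by
  have hP1 : qPochInf q q ≠ 0 := qPochInf_ne_zero hq hq
  have hP2 : qPochInf q (-q) ≠ 0 := qPochInf_ne_zero hq (by rwa [norm_neg])
  have hP3 := qPochInf_ne_zero (norm_pow_lt_one hq three_ne_zero)
    (norm_pow_lt_one hq three_ne_zero)
  have hsum := hasSum_succ_sub_of_tendsto (summable_qTelescope_succ_sub hq) (tendsto_qTelescope hq)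
  rw [tsum_congr (summand_eq_qTelescope_succ_sub_div hq), (hsum.div_const _).tsum_eq,
    qTelescope_zero, ← qPochInf_mul_qPochInf_neg hq q,
    eq_div_of_mul_eq hP2 (qPochInf_sq_mul_qPochInf_neg hq)]
  field_simp
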